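/- Fix ε ≠ 0 and define T_ε on the set {(x,t,u,v) : x > 0, u ≠ 0} ⊆ ℝ^4 by T_ε(x,t,u,v) = (e^{t+v/2}, t, 4ε e^{-(v+2t)}/(u x^2), 2(ε ln x - t)). Then for every integer N ≥ 1 the 2N-th iterate satisfies T_ε^{2N}(x,t,u,v) = (x^{ε^N}, t, x^{2(1-ε^N)} u, ε^N v + 2(ε^N - 1)t). Consequently, if ε = 1 then T_ε ∘ T_ε = id (a cyclic group of order 2), and if ε = -1 then T_ε^4 = id (a cyclic group of order 4). -/

import Mathlib

/-!
Squaring `T_ε` gives the map `(x,t,u,v) ↦ (x^ε, t, x^{2(1-ε)} u, ε v + 2(ε-1) t)`: the factor `4ε`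
cancels in the `u`-component and `ln (e^{t+v/2}) = t + v/2` in the other ones. In the coordinates
`(ln x, t, ln |u| + 2 ln x, v + 2t)` this map is `diag(ε, 1, 1, ε)`, so its `N`-th power multiplies
`ln x` and `v + 2t` by `ε^N`.
-/

open Real

/-- The transformation `x' = e^{t+v/2}, t' = t, u' = 4ε e^{-(v+2t)}/(ux²),
`v' = 2(ε ln x - t)` acting on the variables `(x,t,u,v)` of the potential system
`v_x = xu, v_t = (x/u) u_x`. -/
noncomputable def Teps (ε : ℝ) : ℝ × ℝ × ℝ × ℝ → ℝ × ℝ × ℝ × ℝ :=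
  fun p => (exp (p.2.1 + p.2.2.2 / 2), p.2.1,
    4 * ε * exp (-(p.2.2.2 + 2 * p.2.1)) / (p.2.2.1 * p.1 ^ 2),
    2 * (ε * log p.1 - p.2.1))

theorem Teps_Teps {ε : ℝ} (hε : ε ≠ 0) {x u : ℝ} (hx : 0 < x) (hu : u ≠ 0) (t v : ℝ) :
    Teps ε (Teps ε (x, t, u, v)) =
      (x ^ ε, t, x ^ (2 * (1 - ε)) * u, ε * v + 2 * (ε - 1) * t) := by
  have hx_sq : x ^ 2 = exp (2 * log x) := by
    rw [← rpow_natCast, rpow_def_of_pos hx]; ring_nf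
  have hexp_sq : exp (t + v / 2) ^ 2 = exp (2 * t + v) := by
    rw [← exp_nat_mul]; ring_nf
  simp only [Teps, Prod.mk.injEq, log_exp, true_and]
  refine ⟨?_, ?_, by ring⟩
  · rw [rpow_def_of_pos hx]; ring_nf
  · rw [hx_sq, hexp_sq, rpow_def_of_pos hx]
    field_simp
    simp only [← exp_add, exp_eq_exp]
    ring

theorem Teps_iterate_two_mul {ε : ℝ} (hε : ε ≠ 0) {x u : ℝ} (hx : 0 < x) (hu : u ≠ 0)
    (t v : ℝ) (N : ℕ) :
    (Teps ε)^[2 * N] (x, t, u, v) =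
      (x ^ (ε ^ N), t, x ^ (2 * (1 - ε ^ N)) * u, ε ^ N * v + 2 * (ε ^ N - 1) * t) := by
  induction N with
  | zero => simp
  | succ n ih =>
    have hxN : 0 < x ^ (ε ^ n) := rpow_pos_of_pos hx _
    have huN : x ^ (2 * (1 - ε ^ n)) * u ≠ 0 := mul_ne_zero (rpow_pos_of_pos hx _).ne' hu
    rw [show 2 * (n + 1) = 2 * n + 1 + 1 by ring, Function.iterate_succ_apply',
      Function.iterate_succ_apply', ih, Teps_Teps hε hxN huN]
    simp only [Prod.mk.injEq, ← rpow_mul hx.le, true_and]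
    refine ⟨by rw [pow_succ], ?_, by ring⟩
    rw [← mul_assoc, ← rpow_add hx]
    ring_nf

/-- for `ε ≠ 0`, the `2N`-th iterate of `T_ε` on
`{(x,t,u,v) : x > 0, u ≠ 0}` is
`T_ε^{2N}(x,t,u,v) = (x^{ε^N}, t, x^{2(1-ε^N)} u, ε^N v + 2(ε^N - 1)t)`.
Consequently `T_ε ∘ T_ε = id` if `ε = 1` (cyclic group of order 2), and
`T_ε^4 = id` if `ε = -1` (cyclic group of order 4). -/
theorem stmt14 (ε : ℝ) (hε : ε ≠ 0) :
    (∀ N : ℕ, 1 ≤ N → ∀ x t u v : ℝ, 0 < x → u ≠ 0 →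
      (Teps ε)^[2 * N] (x, t, u, v) =
        (x ^ (ε ^ N), t, x ^ (2 * (1 - ε ^ N)) * u, ε ^ N * v + 2 * (ε ^ N - 1) * t)) ∧
    (ε = 1 → ∀ x t u v : ℝ, 0 < x → u ≠ 0 →
      Teps ε (Teps ε (x, t, u, v)) = (x, t, u, v)) ∧
    (ε = -1 → ∀ x t u v : ℝ, 0 < x → u ≠ 0 →
      (Teps ε)^[4] (x, t, u, v) = (x, t, u, v)) := by
  refine ⟨fun N _ x t u v hx hu => Teps_iterate_two_mul hε hx hu t v N, ?_, ?_⟩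
  · rintro rfl x t u v hx hu
    simp [Teps_Teps hε hx hu]
  · rintro rfl x t u v hx hu
    simpa using Teps_iterate_two_mul hε hx hu t v 2
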